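/- Let f: C_k^n → C_3 be a polymorphism (n ≥ 2, k ≥ 3 odd) and fix a coordinate i. For every unoriented edge e of C_k^{n-1}, the edge chain e ×_i O_k (the oriented 2k-cycle in C_k^n obtained by lifting e through coordinate i along the orientation O_k) satisfies f_E(e ×_i O_k) = 2d · O_3 for some integer d (i.e., the image is an even multiple of O_3). -/

import Mathlib

/-- The oriented edge `[u,v]` as an edge chain: the antisymmetrized generator. -/
noncomputable def oe {V : Type*} [DecidableEq V] (u v : V) : V × V →₀ ℤ :=
  Finsupp.single (u, v) 1 - Finsupp.single (v, u) 1

/-- The map on edge chains induced by a map on vertices. -/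
noncomputable def fE {V W : Type*} [DecidableEq V] [DecidableEq W] (f : V → W) :
    (V × V →₀ ℤ) →+ (W × W →₀ ℤ) :=
  Finsupp.mapDomain.addMonoidHom (Prod.map f f)

/-- Adjacency in the `m`-cycle on vertex set `ZMod m`. -/
def CycAdj (m : ℕ) (u v : ZMod m) : Prop := v = u + 1 ∨ v = u - 1

/-- The oriented cycle `O_m = [0,1] + [1,2] + ⋯ + [m-1,0]` as an edge chain. -/
noncomputable def cycO (m : ℕ) : ZMod m × ZMod m →₀ ℤ :=
  ∑ i ∈ Finset.range m, oe (i : ZMod m) ((i : ZMod m) + 1)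

/-- Adjacency in the direct power `C_kⁿ`: coordinatewise adjacency in `C_k`. -/
def PowAdj (k n : ℕ) (x y : Fin n → ZMod k) : Prop := ∀ i, CycAdj k (x i) (y i)

open Classical in
/-- The edge chain `O_{k,i}ⁿ` of all oriented edges of `C_kⁿ` whose `i`-th coordinate is
oriented according to `O_k`. -/
noncomputable def Okin (k n : ℕ) [NeZero k] (i : Fin n) :
    ((Fin n → ZMod k) × (Fin n → ZMod k)) →₀ ℤ :=
  ∑ p ∈ Finset.univ.filter
      (fun p : (Fin n → ZMod k) × (Fin n → ZMod k) =>
        PowAdj k n p.1 p.2 ∧ p.2 i = p.1 i + 1),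
    oe p.1 p.2

open Classical in
/-- The oriented `2k`-cycle `e ×ᵢ O_k` in `C_kⁿ`: for an unoriented edge `e = (ub, vb)` of
`C_k^{n-1}` (encoded by two vertices of `C_kⁿ` whose coordinates away from `i` form an
edge; the `i`-th coordinates are irrelevant), the chain of oriented edges of `C_kⁿ` whose
restriction away from coordinate `i` is `{ub, vb}` and whose `i`-th coordinate is oriented
according to `O_k`. -/
noncomputable def cross (k n : ℕ) [NeZero k] (i : Fin n) (ub vb : Fin n → ZMod k) :
    ((Fin n → ZMod k) × (Fin n → ZMod k)) →₀ ℤ :=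
  ∑ p ∈ Finset.univ.filter
      (fun p : (Fin n → ZMod k) × (Fin n → ZMod k) =>
        ((∀ j, j ≠ i → p.1 j = ub j ∧ p.2 j = vb j) ∨
         (∀ j, j ≠ i → p.1 j = vb j ∧ p.2 j = ub j)) ∧
        PowAdj k n p.1 p.2 ∧ p.2 i = p.1 i + 1),
    oe p.1 p.2


/-! The lift `e ×ᵢ O_k` is a closed walk of length `2k` in `C_kⁿ`, so its image under `f` is a
closed walk of even length in `K_3`. Every oriented edge of `K_3` is `±` an edge of `O_3`, so
this image is `∑ w c • [c, c+1]`; having zero boundary forces `w` to be constant, i.e. the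
image is `w • O_3`, and counting edges along `O_3` mod 2 gives `3w ≡ 2k ≡ 0`. -/

section EdgeChains

variable {V : Type*} [DecidableEq V]

lemma oe_swap (u v : V) : oe v u = -oe u v := by
  simp only [oe]; abel

lemma fE_oe {W : Type*} [DecidableEq W] (f : V → W) (u v : V) :
    fE f (oe u v) = oe (f u) (f v) := by
  simp [oe, fE, Finsupp.mapDomain_sub]

lemma linearCombination_oe {M : Type*} [AddCommGroup M] (g : V × V → M) (u v : V) :
    Finsupp.linearCombination ℤ g (oe u v) = g (u, v) - g (v, u) := by
  simp [oe]

/-- A closed walk has zero boundary. -/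
lemma linearCombination_fst_sum_oe_perm {ι M : Type*} [Fintype ι] [AddCommGroup M]
    (h : V → M) (F : ι → V) (σ : Equiv.Perm ι) :
    Finsupp.linearCombination ℤ (fun p : V × V => h p.1) (∑ j, oe (F j) (F (σ j))) = 0 := by
  simp only [map_sum, linearCombination_oe, Finset.sum_sub_distrib]
  rw [Equiv.sum_comp σ (fun j => h (F j)), sub_self]

end EdgeChains

section Triangle

lemma cycO_three : cycO 3 = oe 0 1 + oe 1 2 + oe (2 : ZMod 3) 0 := by
  simp only [cycO, Finset.sum_range_succ, Finset.sum_range_zero, zero_add]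
  rfl

lemma oe_mem_span_oe_add_one {a b : ZMod 3} (hab : a ≠ b) :
    oe a b ∈ Submodule.span ℤ (Set.range fun c : ZMod 3 => oe c (c + 1)) := by
  have : b = a + 1 ∨ a = b + 1 := by revert a b; decide
  rcases this with rfl | rfl
  · exact Submodule.subset_span ⟨a, rfl⟩
  · rw [oe_swap]
    exact Submodule.neg_mem _ (Submodule.subset_span ⟨b, rfl⟩)

lemma sum_smul_oe_add_one_eq_smul_cycO (w : ZMod 3 → ℤ)
    (hw : ∀ t, Finsupp.linearCombination ℤ
      (fun p : ZMod 3 × ZMod 3 => if p.1 = t then (1 : ℤ) else 0)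
      (∑ c, w c • oe c (c + 1)) = 0) :
    ∑ c, w c • oe c (c + 1) = w 0 • cycO 3 := by
  have hsum : ∀ {M : Type} [AddCommMonoid M] (g : ZMod 3 → M), ∑ c, g c = g 0 + g 1 + g 2 :=
    fun g => Fin.sum_univ_three g
  have hsucc : ((0 : ZMod 3) + 1 = 1) ∧ ((1 : ZMod 3) + 1 = 2) ∧ ((2 : ZMod 3) + 1 = 0) := by
    decide
  have h0 := hw 0
  have h1 := hw 1
  simp only [hsum, hsucc, map_add, map_zsmul, linearCombination_oe] at h0 h1 ⊢
  simp +decide only [↓reduceIte, sub_zero, Int.zsmul_eq_mul, mul_one, sub_self, mul_zero,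
    add_zero, zero_sub, mul_neg] at h0 h1
  rw [cycO_three, show w 1 = w 0 by linarith, show w 2 = w 0 by linarith, smul_add, smul_add]

noncomputable def forwardParity : (ZMod 3 × ZMod 3 →₀ ℤ) →ₗ[ℤ] ZMod 2 :=
  Finsupp.linearCombination ℤ fun p : ZMod 3 × ZMod 3 =>
    if p.2 = p.1 + 1 then (1 : ZMod 2) else 0

lemma forwardParity_oe {a b : ZMod 3} (hab : a ≠ b) : forwardParity (oe a b) = 1 := by
  rw [forwardParity, linearCombination_oe]
  revert a b; decide

theorem exists_sum_oe_perm_eq_two_mul_smul_cycO {ι : Type*} [Fintype ι]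
    (hcard : Even (Fintype.card ι)) (F : ι → ZMod 3) (σ : Equiv.Perm ι)
    (hF : ∀ j, F j ≠ F (σ j)) :
    ∃ d : ℤ, ∑ j, oe (F j) (F (σ j)) = (2 * d) • cycO 3 := by
  have hspan : ∑ j, oe (F j) (F (σ j)) ∈
      Submodule.span ℤ (Set.range fun c : ZMod 3 => oe c (c + 1)) :=
    Submodule.sum_mem _ fun j _ => oe_mem_span_oe_add_one (hF j)
  obtain ⟨w, hw⟩ := (Submodule.mem_span_range_iff_exists_fun ℤ).1 hspan
  have hcyc : ∑ j, oe (F j) (F (σ j)) = w 0 • cycO 3 := by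
    rw [← hw]
    refine sum_smul_oe_add_one_eq_smul_cycO w fun t => ?_
    rw [hw]
    exact linearCombination_fst_sum_oe_perm (fun a => if a = t then 1 else 0) F σ
  have hparity : ((w 0 : ℤ) : ZMod 2) = 0 := by
    have := congrArg forwardParity hcyc
    simp only [map_sum, map_add, map_zsmul, forwardParity_oe (hF _),
      forwardParity_oe (show (0 : ZMod 3) ≠ 1 by decide),
      forwardParity_oe (show (1 : ZMod 3) ≠ 2 by decide),
      forwardParity_oe (show (2 : ZMod 3) ≠ 0 by decide), cycO_three, Finset.sum_const,
      Finset.card_univ, nsmul_eq_mul, mul_one, hcard.natCast_zmod_two, zsmul_eq_mul] at this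
    rwa [show (1 + 1 + 1 : ZMod 2) = 1 by decide, mul_one, eq_comm] at this
  obtain ⟨d, hd⟩ := (ZMod.intCast_zmod_eq_zero_iff_dvd _ 2).1 hparity
  exact ⟨d, by rw [hcyc, hd, Nat.cast_ofNat]⟩

end Triangle

lemma CycAdj.symm {m : ℕ} {u v : ZMod m} (h : CycAdj m u v) : CycAdj m v u := by
  rcases h with rfl | rfl
  · right; ring
  · left; ring

lemma CycAdj.ne {m : ℕ} [Nontrivial (ZMod m)] {u v : ZMod m} (h : CycAdj m u v) : u ≠ v := by
  rintro rfl
  rcases h with h | h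
  · exact one_ne_zero (left_eq_add.mp h)
  · exact one_ne_zero (sub_eq_self.mp h.symm)

section Cross

variable {k n : ℕ} (i : Fin n) (ub vb : Fin n → ZMod k)

/-- The vertices of the `2k`-cycle `e ×ᵢ O_k`: `(a, true)` and `(a, false)` are the lifts of
`ub` and `vb` with `i`-th coordinate `a`. -/
def crossVertex (q : ZMod k × Bool) : Fin n → ZMod k :=
  Function.update (cond q.2 ub vb) i q.1

def crossStep : Equiv.Perm (ZMod k × Bool) :=
  (Equiv.addRight 1).prodCongr Equiv.boolNot

variable {i ub vb}

lemma crossVertex_injective {j : Fin n} (hji : j ≠ i) (hj : ub j ≠ vb j) :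
    Function.Injective (crossVertex i ub vb) := by
  rintro ⟨a, s⟩ ⟨a', s'⟩ h
  have hi := congrFun h i
  have hj := congrFun h j
  simp only [crossVertex, Function.update_self, Function.update_of_ne hji] at hi hj
  cases s <;> cases s' <;> simp_all [eq_comm]

lemma powAdj_crossVertex_crossStep (he : ∀ j, j ≠ i → CycAdj k (ub j) (vb j))
    (q : ZMod k × Bool) :
    PowAdj k n (crossVertex i ub vb q) (crossVertex i ub vb (crossStep q)) := by
  obtain ⟨a, s⟩ := q
  intro j
  by_cases hji : j = i
  · subst hji
    exact Or.inl (by simp [crossVertex, crossStep])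
  · simp only [crossVertex, crossStep, Equiv.prodCongr_apply, Prod.map_apply,
      Function.update_of_ne hji]
    cases s
    exacts [(he j hji).symm, he j hji]

lemma cross_eq_sum_oe_crossVertex [NeZero k] {j : Fin n} (hji : j ≠ i) (hj : ub j ≠ vb j)
    (he : ∀ j, j ≠ i → CycAdj k (ub j) (vb j)) :
    cross k n i ub vb =
      ∑ q, oe (crossVertex i ub vb q) (crossVertex i ub vb (crossStep q)) := by
  set g := fun q => (crossVertex i ub vb q, crossVertex i ub vb (crossStep q))
  have hg : Set.InjOn g (Finset.univ : Finset (ZMod k × Bool)) :=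
    fun q _ q' _ h => crossVertex_injective hji hj (congrArg Prod.fst h)
  rw [cross, ← Finset.sum_image (f := fun p => oe p.1 p.2) hg]
  congr 1
  ext ⟨x, y⟩
  simp only [Finset.mem_filter, Finset.mem_univ, true_and, Finset.mem_image, g, Prod.mk.injEq]
  constructor
  · rintro ⟨hC | hC, -, hi⟩
    · exact ⟨(x i, true), Function.update_eq_iff.2 ⟨rfl, fun j hji => (hC j hji).1.symm⟩,
        Function.update_eq_iff.2 ⟨hi.symm, fun j hji => (hC j hji).2.symm⟩⟩
    · exact ⟨(x i, false), Function.update_eq_iff.2 ⟨rfl, fun j hji => (hC j hji).1.symm⟩,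
        Function.update_eq_iff.2 ⟨hi.symm, fun j hji => (hC j hji).2.symm⟩⟩
  · rintro ⟨q, rfl, rfl⟩
    refine ⟨?_, powAdj_crossVertex_crossStep he q, by simp [crossVertex, crossStep]⟩
    obtain ⟨a, s⟩ := q
    cases s
    · exact Or.inr fun j hji => by simp [crossVertex, crossStep, Function.update_of_ne hji]
    · exact Or.inl fun j hji => by simp [crossVertex, crossStep, Function.update_of_ne hji]

end Cross

theorem cross_even_degree_general (k n : ℕ) [NeZero k] (hk : 3 ≤ k)
    (hn : 2 ≤ n) (f : (Fin n → ZMod k) → ZMod 3)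
    (hf : ∀ x y, PowAdj k n x y → f x ≠ f y) (i : Fin n)
    (ub vb : Fin n → ZMod k) (he : ∀ j, j ≠ i → CycAdj k (ub j) (vb j)) :
    ∃ d : ℤ, fE f (cross k n i ub vb) = (2 * d) • cycO 3 := by
  have : Fact (1 < k) := ⟨by omega⟩
  obtain ⟨j, hji⟩ := Fintype.exists_ne_of_one_lt_card (by rw [Fintype.card_fin]; omega) i
  rw [cross_eq_sum_oe_crossVertex hji (he j hji).ne he, map_sum]
  simp only [fE_oe]
  have hcard : Even (Fintype.card (ZMod k × Bool)) := by simp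
  exact exists_sum_oe_perm_eq_two_mul_smul_cycO hcard (f ∘ crossVertex i ub vb) crossStep
    fun q => hf _ _ (powAdj_crossVertex_crossStep he q)

/-- For a polymorphism `f : C_kⁿ → C_3` (`n ≥ 2`, `k ≥ 3` odd), a coordinate `i`, and any
unoriented edge `e = (ub, vb)` of `C_k^{n-1}`, the image of the lifted oriented `2k`-cycle
`e ×ᵢ O_k` under `f_E` is an even multiple of `O_3`. -/
theorem cross_even_degree (k n : ℕ) [NeZero k] (hk : 3 ≤ k) (hkodd : Odd k)
    (hn : 2 ≤ n) (f : (Fin n → ZMod k) → ZMod 3)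
    (hf : ∀ x y, PowAdj k n x y → f x ≠ f y) (i : Fin n)
    (ub vb : Fin n → ZMod k) (he : ∀ j, j ≠ i → CycAdj k (ub j) (vb j)) :
    ∃ d : ℤ, fE f (cross k n i ub vb) = (2 * d) • cycO 3 :=
  cross_even_degree_general k n hk hn f hf i ub vb he
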